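/- For all integers d ≥ 0, V_d ≤ V_{15} = 2^{121}/(3^{20}·5^9·7^9·11^6·13^4), where V_d = 2^{d+1}(d+1)^s ∏_{j=1}^{s} (2j)^{d−2j}/(2j+1)^{d+1−2j} with s = ⌊(d−1)/2⌋. -/

import Mathlib

open Finset

/-- The Chern–Vaaler volume constant `V_d`. -/
noncomputable def V (d : ℕ) : ℝ :=
  2 ^ (d + 1) * ((d : ℝ) + 1) ^ ((d - 1) / 2) *
    ∏ j ∈ Finset.Icc 1 ((d - 1) / 2),
      (2 * (j : ℝ)) ^ (d - 2 * j) / (2 * (j : ℝ) + 1) ^ (d + 1 - 2 * j)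


noncomputable def P (d s : ℕ) : ℝ :=
  ∏ j ∈ Finset.Icc 1 s, (2 * (j : ℝ)) ^ (d - 2 * j) / (2 * (j : ℝ) + 1) ^ (d + 1 - 2 * j)

noncomputable def Q (s : ℕ) : ℝ := ∏ j ∈ Finset.Icc 1 s, ((2 * (j : ℝ)) / (2 * (j : ℝ) + 1)) ^ 2

lemma P_pos (d s : ℕ) : 0 < P d s := by
  apply Finset.prod_pos
  intro j hj
  have h1 : 1 ≤ j := (Finset.mem_Icc.mp hj).1
  have h2 : (1:ℝ) ≤ (j:ℝ) := by exact_mod_cast h1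
  exact div_pos (pow_pos (by linarith) _) (pow_pos (by linarith) _)

lemma Q_pos (s : ℕ) : 0 < Q s := by
  apply Finset.prod_pos
  intro j hj
  have h1 : 1 ≤ j := (Finset.mem_Icc.mp hj).1
  have h2 : (1:ℝ) ≤ (j:ℝ) := by exact_mod_cast h1
  positivity

lemma Q_le (s : ℕ) (hs : 1 ≤ s) : Q s ≤ 8 / (9 * ((s:ℝ) + 1)) := by
  induction s, hs using Nat.le_induction with
  | base => rw [Q]; norm_num
  | succ s hs ih =>
    have hstep : Q (s+1) = Q s * ((2 * ((s:ℝ)+1)) / (2 * ((s:ℝ)+1) + 1)) ^ 2 := by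
      rw [Q, Q, Finset.prod_Icc_succ_top (by omega)]
      push_cast; ring
    have hs0 : (0:ℝ) ≤ (s:ℝ) := Nat.cast_nonneg s
    calc Q (s+1) = Q s * ((2 * ((s:ℝ)+1)) / (2 * ((s:ℝ)+1) + 1)) ^ 2 := hstep
      _ ≤ (8 / (9 * ((s:ℝ) + 1))) * ((2 * ((s:ℝ)+1)) / (2 * ((s:ℝ)+1) + 1)) ^ 2 := by
          apply mul_le_mul_of_nonneg_right ih (by positivity)
      _ ≤ 8 / (9 * ((s:ℝ) + 2)) := by
          rw [div_pow, div_mul_div_comm, div_le_div_iff₀ (by positivity) (by positivity)]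
          nlinarith [sq_nonneg ((s:ℝ)+1)]
      _ = 8 / (9 * ((((s+1 : ℕ)) : ℝ) + 1)) := by push_cast; ring

lemma P_succ (d s : ℕ) (h : 2 * s ≤ d) :
    P (d + 2) (s + 1) =
      P d s * Q s * ((2 * (s:ℝ) + 2) ^ (d - 2*s) / (2 * (s:ℝ) + 3) ^ (d + 1 - 2*s)) := by
  rw [P, Finset.prod_Icc_succ_top (by omega)]
  have hhead : (∏ j ∈ Finset.Icc 1 s,
      (2 * (j : ℝ)) ^ (d + 2 - 2 * j) / (2 * (j : ℝ) + 1) ^ (d + 2 + 1 - 2 * j))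
      = P d s * Q s := by
    rw [P, Q, ← Finset.prod_mul_distrib]
    apply Finset.prod_congr rfl
    intro j hj
    have hj2 : 2 * j ≤ d := by
      have := (Finset.mem_Icc.mp hj).2; omega
    have h1 : d + 2 - 2*j = (d - 2*j) + 2 := by omega
    have h2 : d + 2 + 1 - 2*j = (d + 1 - 2*j) + 2 := by omega
    rw [h1, h2, pow_add, pow_add, div_pow, div_mul_div_comm]
  rw [hhead]
  have h3 : d + 2 - 2*(s+1) = d - 2*s := by omega
  have h4 : d + 2 + 1 - 2*(s+1) = d + 1 - 2*s := by omega
  rw [h3, h4]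
  push_cast
  ring

lemma one_add_pow_le (s : ℕ) (t : ℝ) (ht : 0 < t) (hst : (s:ℝ) ≤ t) : (1 + 1/t) ^ s ≤ 3 := by
  have h1 : (0:ℝ) < 1 + 1/t := by positivity
  have h2 : 1 + 1/t ≤ Real.exp (1/t) := by
    have := Real.add_one_le_exp (1/t); linarith
  calc (1 + 1/t) ^ s ≤ (Real.exp (1/t)) ^ s := pow_le_pow_left₀ h1.le h2 s
    _ = Real.exp ((s:ℝ) * (1/t)) := by rw [← Real.exp_nat_mul]
    _ ≤ Real.exp 1 := by
        apply Real.exp_le_exp.mpr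
        rw [mul_one_div]
        exact div_le_one_of_le₀ hst ht.le
    _ ≤ 3 := by
        have := Real.exp_one_lt_d9; linarith

lemma V_odd (s : ℕ) : V (2*s+1) = 2 ^ (2*s+2) * (2*(s:ℝ)+2) ^ s * P (2*s+1) s := by
  have h : (2*s+1-1)/2 = s := by omega
  rw [V, P, h]
  push_cast
  ring

lemma V_even (s : ℕ) : V (2*s+2) = 2 ^ (2*s+3) * (2*(s:ℝ)+3) ^ s * P (2*s+2) s := by
  have h : (2*s+2-1)/2 = s := by omega
  rw [V, P, h]
  push_cast
  ring

lemma step_odd (s : ℕ) (hs : 10 ≤ s) : V (2*s+3) ≤ V (2*s+1) := by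
  have hs' : (10:ℝ) ≤ (s:ℝ) := by exact_mod_cast hs
  have e1 := V_odd s
  have e2 := V_odd (s+1)
  have e3 := P_succ (2*s+1) s (by omega)
  rw [show 2*(s+1)+1 = 2*s+1+2 from by ring] at e2
  rw [e3] at e2
  rw [show 2*s+1-2*s = 1 from by omega, show 2*s+1+1-2*s = 2 from by omega] at e2
  push_cast at e2
  rw [show 2*s+3 = 2*s+1+2 from by omega, e2, e1]
  have hP := P_pos (2*s+1) s
  have hQ := Q_le s (by omega)
  have hQ0 := Q_pos s
  have hexp : (2*((s:ℝ)+1)+2) ^ s ≤ 3 * (2*(s:ℝ)+2) ^ s := by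
    have h3 := one_add_pow_le s ((s:ℝ)+1) (by positivity) (by linarith)
    have hb : (2*((s:ℝ)+1)+2) = (2*(s:ℝ)+2) * (1 + 1/((s:ℝ)+1)) := by
      field_simp
    rw [hb, mul_pow]
    calc (2*(s:ℝ)+2)^s * (1 + 1/((s:ℝ)+1))^s ≤ (2*(s:ℝ)+2)^s * 3 :=
          mul_le_mul_of_nonneg_left h3 (by positivity)
      _ = 3 * (2*(s:ℝ)+2)^s := by ring
  have hrest : (0:ℝ) < 2^(2*(s+1)+2) * (2*((s:ℝ)+1)+2) *
      ((2*(s:ℝ)+2)^1 / (2*(s:ℝ)+3)^2) * P (2*s+1) s := by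
    have : (0:ℝ) < (2*(s:ℝ)+2)^1 / (2*(s:ℝ)+3)^2 := by positivity
    positivity
  calc 2^(2*(s+1)+2) * (2*((s:ℝ)+1)+2)^(s+1) *
        (P (2*s+1) s * Q s * ((2*(s:ℝ)+2)^1 / (2*(s:ℝ)+3)^2))
      = (2*((s:ℝ)+1)+2)^s * (Q s * (2^(2*(s+1)+2) * (2*((s:ℝ)+1)+2) *
        ((2*(s:ℝ)+2)^1 / (2*(s:ℝ)+3)^2) * P (2*s+1) s)) := by ring
    _ ≤ (3 * (2*(s:ℝ)+2)^s) * ((8/(9*((s:ℝ)+1))) * (2^(2*(s+1)+2) * (2*((s:ℝ)+1)+2) *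
        ((2*(s:ℝ)+2)^1 / (2*(s:ℝ)+3)^2) * P (2*s+1) s)) := by
        apply mul_le_mul hexp (mul_le_mul_of_nonneg_right hQ hrest.le)
          (mul_nonneg hQ0.le hrest.le) (by positivity)
    _ ≤ 2 ^ (2*s+2) * (2*(s:ℝ)+2) ^ s * P (2*s+1) s := by
        have hkey : 3 * (8/(9*((s:ℝ)+1))) * 4 * (2*((s:ℝ)+1)+2) *
            ((2*(s:ℝ)+2) / (2*(s:ℝ)+3)^2) ≤ 1 := by
          rw [show 3 * (8/(9*((s:ℝ)+1))) * 4 * (2*((s:ℝ)+1)+2) *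
              ((2*(s:ℝ)+2) / (2*(s:ℝ)+3)^2)
              = (3 * 8 * 4 * (2*((s:ℝ)+1)+2) * (2*(s:ℝ)+2)) /
                (9*((s:ℝ)+1)) / ((2*(s:ℝ)+3)^2) from by ring,
            div_le_one (by positivity : (0:ℝ) < (2*(s:ℝ)+3)^2),
            div_le_iff₀ (by positivity : (0:ℝ) < 9*((s:ℝ)+1))]
          nlinarith [sq_nonneg ((s:ℝ)-10)]
        calc (3 * (2*(s:ℝ)+2)^s) * ((8/(9*((s:ℝ)+1))) * (2^(2*(s+1)+2) * (2*((s:ℝ)+1)+2) *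
              ((2*(s:ℝ)+2)^1 / (2*(s:ℝ)+3)^2) * P (2*s+1) s))
            = (2 ^ (2*s+2) * (2*(s:ℝ)+2) ^ s * P (2*s+1) s) *
              (3 * (8/(9*((s:ℝ)+1))) * 4 * (2*((s:ℝ)+1)+2) *
               ((2*(s:ℝ)+2) / (2*(s:ℝ)+3)^2)) := by
              rw [show 2*(s+1)+2 = (2*s+2)+2 from by ring, pow_add]
              ring
          _ ≤ (2 ^ (2*s+2) * (2*(s:ℝ)+2) ^ s * P (2*s+1) s) * 1 := by
              apply mul_le_mul_of_nonneg_left hkey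
              exact mul_nonneg (by positivity) hP.le
          _ = 2 ^ (2*s+2) * (2*(s:ℝ)+2) ^ s * P (2*s+1) s := by ring

lemma step_even (s : ℕ) (hs : 10 ≤ s) : V (2*s+4) ≤ V (2*s+2) := by
  have hs' : (10:ℝ) ≤ (s:ℝ) := by exact_mod_cast hs
  have e1 := V_even s
  have e2 := V_even (s+1)
  have e3 := P_succ (2*s+2) s (by omega)
  rw [show 2*(s+1)+2 = 2*s+2+2 from by ring] at e2
  rw [e3] at e2
  rw [show 2*s+2-2*s = 2 from by omega, show 2*s+2+1-2*s = 3 from by omega] at e2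
  push_cast at e2
  rw [show 2*s+4 = 2*s+2+2 from by omega, e2, e1]
  have hP := P_pos (2*s+2) s
  have hQ := Q_le s (by omega)
  have hQ0 := Q_pos s
  have hexp : (2*((s:ℝ)+1)+3) ^ s ≤ 3 * (2*(s:ℝ)+3) ^ s := by
    have h3 := one_add_pow_le s ((s:ℝ)+3/2) (by positivity) (by linarith)
    have hb : (2*((s:ℝ)+1)+3) = (2*(s:ℝ)+3) * (1 + 1/((s:ℝ)+3/2)) := by
      field_simp; ring
    rw [hb, mul_pow]
    calc (2*(s:ℝ)+3)^s * (1 + 1/((s:ℝ)+3/2))^s ≤ (2*(s:ℝ)+3)^s * 3 :=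
          mul_le_mul_of_nonneg_left h3 (by positivity)
      _ = 3 * (2*(s:ℝ)+3)^s := by ring
  have hrest : (0:ℝ) < 2^(2*(s+1)+3) * (2*((s:ℝ)+1)+3) *
      ((2*(s:ℝ)+2)^2 / (2*(s:ℝ)+3)^3) * P (2*s+2) s := by
    have : (0:ℝ) < (2*(s:ℝ)+2)^2 / (2*(s:ℝ)+3)^3 := by positivity
    positivity
  calc 2^(2*(s+1)+3) * (2*((s:ℝ)+1)+3)^(s+1) *
        (P (2*s+2) s * Q s * ((2*(s:ℝ)+2)^2 / (2*(s:ℝ)+3)^3))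
      = (2*((s:ℝ)+1)+3)^s * (Q s * (2^(2*(s+1)+3) * (2*((s:ℝ)+1)+3) *
        ((2*(s:ℝ)+2)^2 / (2*(s:ℝ)+3)^3) * P (2*s+2) s)) := by ring
    _ ≤ (3 * (2*(s:ℝ)+3)^s) * ((8/(9*((s:ℝ)+1))) * (2^(2*(s+1)+3) * (2*((s:ℝ)+1)+3) *
        ((2*(s:ℝ)+2)^2 / (2*(s:ℝ)+3)^3) * P (2*s+2) s)) := by
        apply mul_le_mul hexp (mul_le_mul_of_nonneg_right hQ hrest.le)
          (mul_nonneg hQ0.le hrest.le) (by positivity)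
    _ ≤ 2 ^ (2*s+3) * (2*(s:ℝ)+3) ^ s * P (2*s+2) s := by
        have hkey : 3 * (8/(9*((s:ℝ)+1))) * 4 * (2*((s:ℝ)+1)+3) *
            ((2*(s:ℝ)+2)^2 / (2*(s:ℝ)+3)^3) ≤ 1 := by
          rw [show 3 * (8/(9*((s:ℝ)+1))) * 4 * (2*((s:ℝ)+1)+3) *
              ((2*(s:ℝ)+2)^2 / (2*(s:ℝ)+3)^3)
              = (3 * 8 * 4 * (2*((s:ℝ)+1)+3) * (2*(s:ℝ)+2)^2) /
                (9*((s:ℝ)+1)) / ((2*(s:ℝ)+3)^3) from by ring,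
            div_le_one (by positivity : (0:ℝ) < (2*(s:ℝ)+3)^3),
            div_le_iff₀ (by positivity : (0:ℝ) < 9*((s:ℝ)+1))]
          nlinarith [sq_nonneg ((s:ℝ)-10), mul_nonneg (sq_nonneg ((s:ℝ)-10)) (by linarith : (0:ℝ) ≤ (s:ℝ))]
        calc (3 * (2*(s:ℝ)+3)^s) * ((8/(9*((s:ℝ)+1))) * (2^(2*(s+1)+3) * (2*((s:ℝ)+1)+3) *
              ((2*(s:ℝ)+2)^2 / (2*(s:ℝ)+3)^3) * P (2*s+2) s))
            = (2 ^ (2*s+3) * (2*(s:ℝ)+3) ^ s * P (2*s+2) s) *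
              (3 * (8/(9*((s:ℝ)+1))) * 4 * (2*((s:ℝ)+1)+3) *
               ((2*(s:ℝ)+2)^2 / (2*(s:ℝ)+3)^3)) := by
              rw [show 2*(s+1)+3 = (2*s+3)+2 from by ring, pow_add]
              ring
          _ ≤ (2 ^ (2*s+3) * (2*(s:ℝ)+3) ^ s * P (2*s+2) s) * 1 := by
              apply mul_le_mul_of_nonneg_left hkey
              exact mul_nonneg (by positivity) hP.le
          _ = 2 ^ (2*s+3) * (2*(s:ℝ)+3) ^ s * P (2*s+2) s := by ring

set_option maxHeartbeats 1000000 in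
lemma V_small (d : ℕ) (hd : d ≤ 22) : V d ≤ V 15 := by
  interval_cases d <;> norm_num [V, Finset.prod_Icc_succ_top]

lemma V_le (d : ℕ) : V d ≤ V 15 := by
  have H : ∀ n, ∀ d ≤ n, V d ≤ V 15 := by
    intro n
    induction n with
    | zero => intro d hd; exact V_small d (by omega)
    | succ n ih =>
      intro d hd
      rcases Nat.lt_or_ge d 23 with h | h
      · exact V_small d (by omega)
      · rcases Nat.even_or_odd d with ⟨k, hk⟩ | ⟨k, hk⟩
        · obtain ⟨m, hm, rfl⟩ : ∃ m, 10 ≤ m ∧ d = 2*m+4 := ⟨(d-4)/2, by omega, by omega⟩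
          exact (step_even m hm).trans (ih _ (by omega))
        · obtain ⟨m, hm, rfl⟩ : ∃ m, 10 ≤ m ∧ d = 2*m+3 := ⟨(d-3)/2, by omega, by omega⟩
          exact (step_odd m hm).trans (ih _ (by omega))
  exact H d d le_rfl

theorem stmt_11 :
    (∀ d : ℕ, V d ≤ V 15) ∧
      V 15 = 2 ^ 121 / (3 ^ 20 * 5 ^ 9 * 7 ^ 9 * 11 ^ 6 * 13 ^ 4) := by
  constructor
  · exact V_le
  · rw [V]; norm_num [Finset.prod_Icc_succ_top]
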